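/- Let L, L₀ be lagrangian subspaces of Ĥ = H ⊕ H. The following are equivalent: (a) L is the graph of an operator JA : L₀ → L₀⊥ with A bounded self-adjoint on L₀; (b) L ∩ L₀⊥ = {0} and L + L₀⊥ is closed; (b') Ĥ = L ⊕ L₀⊥ (direct sum); (b'') Ĥ = L + L₀⊥; (c) the operator R_L + R_{L₀} is invertible, where R_L := 2P_L − 1 is the orthogonal reflection in L. -/

import Mathlib

/-!
`J` is an isometry with `J² = -1` that maps a lagrangian `L` onto `Lᗮ` and `Lᗮ` onto `L`. Hence
it maps `L ⊓ L₀ᗮ` onto `Lᗮ ⊓ L₀ = (L ⊔ L₀ᗮ)ᗮ`, so `L ⊓ L₀ᗮ = 0` exactly when `L + L₀ᗮ` is dense,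
and it maps `L ⊔ L₀ᗮ` onto `Lᗮ ⊔ L₀`. This gives (b) ⇔ (b') ⇔ (b'').

Since `R_L + R_{L₀} = 2 (P_L - P_{L₀ᗮ})`, (c) is about `P_M - P_N` for `M = L`, `N = L₀ᗮ`. Its range
lies in `M + N`; it is injective when `M ⊕ N` is the whole space, and its range contains `Nᗮ`
(and `Mᗮ`) when `M + N` is, so it is onto once `Mᗮ + Nᗮ = Lᗮ + L₀` is the whole space too.

For (a), the graph of `JA` is always complementary to `L₀ᗮ`. Conversely, when `L ⊕ L₀ᗮ` is the
whole space the projection onto `L₀ᗮ` along `L` is bounded, and `J` composed with it defines `A`;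
`A` is symmetric because `⟪x + JAx, J(y + JAy)⟫ = ⟪Ax, y⟫ - ⟪x, Ay⟫` vanishes when the graph is
lagrangian.
-/

open scoped InnerProductSpace

noncomputable section

variable (H : Type) [NormedAddCommGroup H] [InnerProductSpace ℂ H] [CompleteSpace H]

/-- `Ĥ = H ⊕ H` with the Hilbert (l²) structure. -/
abbrev Hh := WithLp 2 (H × H)

/-- The complex structure `J(x,y) = (y, -x)` on `Ĥ = H ⊕ H`. -/
def hatJ : Hh H →L[ℂ] Hh H :=
  (WithLp.prodContinuousLinearEquiv 2 ℂ H H).symm.toContinuousLinearMap ∘L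
    ((ContinuousLinearMap.snd ℂ H H).prod (-(ContinuousLinearMap.fst ℂ H H))) ∘L
    (WithLp.prodContinuousLinearEquiv 2 ℂ H H).toContinuousLinearMap

/-- A subspace `L ⊆ Ĥ` is lagrangian if `JL = L⊥`. -/
def IsLagrangian (L : Submodule ℂ (Hh H)) : Prop :=
  L.map (hatJ H).toLinearMap = Lᗮ

/-- The graph `{v + J(A v) : v ∈ L₀}` of `JA : L₀ → L₀⊥`. -/
def graphJA (L₀ : Submodule ℂ (Hh H)) (A : ↥L₀ →L[ℂ] ↥L₀) : Submodule ℂ (Hh H) :=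
  LinearMap.range (L₀.subtype + ((hatJ H).toLinearMap.comp (L₀.subtype.comp A.toLinearMap)))

/-- The orthogonal reflection `R_L = 2 P_L - 1` in the closed subspace `L`. -/
def reflIn (L : Submodule ℂ (Hh H)) [CompleteSpace ↥L] : Hh H →L[ℂ] Hh H :=
  (2 : ℂ) • (L.subtypeL ∘L L.orthogonalProjectionOnto) - 1

end

section StarProjectionSub

variable {𝕜 E : Type*} [RCLike 𝕜] [NormedAddCommGroup E] [InnerProductSpace 𝕜 E]
  {M N : Submodule 𝕜 E} [M.HasOrthogonalProjection] [N.HasOrthogonalProjection]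

theorem Submodule.range_starProjection_sub_le :
    (M.starProjection - N.starProjection).range ≤ M ⊔ N := by
  rintro _ ⟨v, rfl⟩
  exact sub_mem_sup (M.starProjection_apply_mem v) (N.starProjection_apply_mem v)

theorem Submodule.injective_starProjection_sub (h : IsCompl M N) :
    Function.Injective (M.starProjection - N.starProjection) := by
  refine (injective_iff_map_eq_zero _).2 fun v hv => ?_
  have heq : M.starProjection v = N.starProjection v := sub_eq_zero.1 hv
  have hMN : M.starProjection v ∈ M ⊓ N :=
    ⟨M.starProjection_apply_mem v, heq ▸ N.starProjection_apply_mem v⟩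
  rw [h.inf_eq_bot, Submodule.mem_bot] at hMN
  have hv' : v ∈ Mᗮ ⊓ Nᗮ :=
    ⟨(starProjection_apply_eq_zero_iff _).1 hMN,
      (starProjection_apply_eq_zero_iff _).1 (heq ▸ hMN)⟩
  rwa [Submodule.inf_orthogonal, h.sup_eq_top, Submodule.top_orthogonal_eq_bot,
    Submodule.mem_bot] at hv'

theorem Submodule.orthogonal_le_range_starProjection_sub (h : M ⊔ N = ⊤) :
    Nᗮ ≤ (M.starProjection - N.starProjection).range := by
  intro p hp
  obtain ⟨a, ha, n, hn, rfl⟩ := Submodule.mem_sup.1 (h ▸ Submodule.mem_top : p ∈ M ⊔ N)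
  -- `p = a + n` is the image of `a`, because `P_N a = P_N (p - n) = -n`.
  refine ⟨a, ?_⟩
  have hPa : N.starProjection a = -n := by
    rw [← add_sub_cancel_right a n, map_sub, (starProjection_apply_eq_zero_iff _).2 hp,
      starProjection_eq_self_iff.2 hn, zero_sub]
  simp [starProjection_eq_self_iff.2 ha, hPa]

theorem Submodule.surjective_starProjection_sub (h : M ⊔ N = ⊤) (h' : Mᗮ ⊔ Nᗮ = ⊤) :
    Function.Surjective (M.starProjection - N.starProjection) := by
  refine LinearMap.range_eq_top.1 <| eq_top_iff.2 <|
    h' ▸ sup_le ?_ (orthogonal_le_range_starProjection_sub h)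
  have := orthogonal_le_range_starProjection_sub (sup_comm M N ▸ h)
  rwa [← neg_sub, ContinuousLinearMap.toLinearMap_neg, LinearMap.range_neg] at this

end StarProjectionSub

section Lagrangian

variable {H : Type} [NormedAddCommGroup H] [InnerProductSpace ℂ H]

theorem reflIn_add_reflIn (L M : Submodule ℂ (Hh H)) [CompleteSpace L] [CompleteSpace M] :
    reflIn H L + reflIn H M = (2 : ℂ) • (L.starProjection - Mᗮ.starProjection) := by
  rw [reflIn, reflIn, Submodule.starProjection_orthogonal']
  change (2 : ℂ) • L.starProjection - 1 + ((2 : ℂ) • M.starProjection - 1) = _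
  module

theorem isUnit_reflIn_add_reflIn_iff [CompleteSpace H] (L M : Submodule ℂ (Hh H))
    [CompleteSpace L] [CompleteSpace M] : IsUnit (reflIn H L + reflIn H M) ↔
      Function.Bijective (L.starProjection - Mᗮ.starProjection) := by
  rw [reflIn_add_reflIn, ← Units.smul_mk0 two_ne_zero, isUnit_smul_iff,
    ContinuousLinearMap.isUnit_iff_bijective]

theorem hatJ_hatJ (x : Hh H) : hatJ H (hatJ H x) = -x := by simp [hatJ]; rfl

theorem inner_hatJ_hatJ (x y : Hh H) : ⟪hatJ H x, hatJ H y⟫_ℂ = ⟪x, y⟫_ℂ := by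
  simp [hatJ, WithLp.prod_inner_apply, add_comm]

theorem hatJ_injective : Function.Injective (hatJ H) :=
  Function.LeftInverse.injective (g := -hatJ H) fun x => by simp [hatJ_hatJ]

theorem hatJ_surjective : Function.Surjective (hatJ H) :=
  fun x => ⟨-hatJ H x, by simp [hatJ_hatJ]⟩

namespace IsLagrangian

variable {L L₀ : Submodule ℂ (Hh H)}

theorem hatJ_mem (hL : IsLagrangian H L) {x : Hh H} (hx : x ∈ L) : hatJ H x ∈ Lᗮ :=
  hL ▸ Submodule.mem_map_of_mem hx

theorem map_orthogonal (hL : IsLagrangian H L) : Lᗮ.map (hatJ H).toLinearMap = L := by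
  have hJJ : (hatJ H).toLinearMap ∘ₗ (hatJ H).toLinearMap = -LinearMap.id :=
    LinearMap.ext hatJ_hatJ
  rw [← hL, ← Submodule.map_comp, hJJ, Submodule.map_neg, Submodule.map_id]

theorem hatJ_mem_of_mem_orthogonal (hL : IsLagrangian H L) {x : Hh H} (hx : x ∈ Lᗮ) :
    hatJ H x ∈ L :=
  hL.map_orthogonal ▸ Submodule.mem_map_of_mem hx

theorem map_inf_orthogonal (hL : IsLagrangian H L) (hL₀ : IsLagrangian H L₀)
    [CompleteSpace L₀] :
    (L ⊓ L₀ᗮ).map (hatJ H).toLinearMap = (L ⊔ L₀ᗮ)ᗮ := by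
  rw [Submodule.map_inf _ hatJ_injective, hL, hL₀.map_orthogonal, ← Submodule.inf_orthogonal,
    Submodule.orthogonal_orthogonal]

theorem map_sup_orthogonal (hL : IsLagrangian H L) (hL₀ : IsLagrangian H L₀)
    [CompleteSpace L₀] :
    (L ⊔ L₀ᗮ).map (hatJ H).toLinearMap = Lᗮ ⊔ L₀ᗮᗮ := by
  rw [Submodule.map_sup, hL, hL₀.map_orthogonal, Submodule.orthogonal_orthogonal]

theorem inf_orthogonal_eq_bot_iff (hL : IsLagrangian H L) (hL₀ : IsLagrangian H L₀)
    [CompleteSpace L₀] : L ⊓ L₀ᗮ = ⊥ ↔ (L ⊔ L₀ᗮ)ᗮ = ⊥ := by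
  rw [← hL.map_inf_orthogonal hL₀,
    ← (Submodule.map_injective_of_injective hatJ_injective).eq_iff, Submodule.map_bot]

theorem orthogonal_sup_orthogonal_eq_top (hL : IsLagrangian H L) (hL₀ : IsLagrangian H L₀)
    [CompleteSpace L₀] (h : L ⊔ L₀ᗮ = ⊤) : Lᗮ ⊔ L₀ᗮᗮ = ⊤ := by
  rw [← hL.map_sup_orthogonal hL₀, h, Submodule.map_top, LinearMap.range_eq_top]
  exact hatJ_surjective

theorem graphJA_sup_orthogonal_eq_top (hL₀ : IsLagrangian H L₀) [CompleteSpace L₀]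
    (A : L₀ →L[ℂ] L₀) : graphJA H L₀ A ⊔ L₀ᗮ = ⊤ := by
  refine eq_top_iff.2 (L₀.sup_orthogonal_of_hasOrthogonalProjection ▸ sup_le ?_ le_sup_right)
  intro u hu
  have hgraph : u + hatJ H (A ⟨u, hu⟩) ∈ graphJA H L₀ A := ⟨⟨u, hu⟩, rfl⟩
  simpa using Submodule.sub_mem_sup hgraph (hL₀.hatJ_mem (A ⟨u, hu⟩).2)

theorem exists_eq_graphJA [CompleteSpace H] (hL₀ : IsLagrangian H L₀) [CompleteSpace L]
    [CompleteSpace L₀] (h : IsCompl L L₀ᗮ) : ∃ A : L₀ →L[ℂ] L₀, L = graphJA H L₀ A := by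
  have hc : Submodule.IsTopCompl L₀ᗮ L :=
    Submodule.IsCompl.isTopCompl_of_isClosed h.symm (Submodule.isClosed_orthogonal _)
      (completeSpace_coe_iff_isComplete.1 ‹_›).isClosed
  -- With `Q` the bounded projection onto `L₀ᗮ` along `L`, `A := J Q` gives `u + J A u = u - Q u`,
  -- so the graph lies in `L`; being complementary to `L₀ᗮ` too, it is all of `L`.
  let Q := L₀ᗮ.projectionOntoL L hc
  let A : L₀ →L[ℂ] L₀ := (hatJ H ∘L L₀ᗮ.subtypeL ∘L Q ∘L L₀.subtypeL).codRestrict L₀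
    fun u => hL₀.hatJ_mem_of_mem_orthogonal (Q u).2
  refine ⟨A, (eq_of_le_of_inf_le_of_sup_le (z := L₀ᗮ) ?_ ?_ ?_).symm⟩
  · rintro _ ⟨u, rfl⟩
    change (u : Hh H) + hatJ H (hatJ H (Q u)) ∈ L
    rw [hatJ_hatJ, ← sub_eq_add_neg, ← Submodule.projectionOntoL_apply_eq_zero_iff hc, map_sub,
      Submodule.projectionOntoL_apply_left, sub_self]
  · rw [h.inf_eq_bot]
    exact bot_le
  · rw [h.sup_eq_top, graphJA_sup_orthogonal_eq_top hL₀]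

theorem isSymmetric_of_graphJA (hL₀ : IsLagrangian H L₀) {A : L₀ →L[ℂ] L₀}
    (hA : IsLagrangian H (graphJA H L₀ A)) : (A : L₀ →ₗ[ℂ] L₀).IsSymmetric := by
  intro x y
  have hx : (x : Hh H) + hatJ H (A x) ∈ graphJA H L₀ A := ⟨x, rfl⟩
  have hy : (y : Hh H) + hatJ H (A y) ∈ graphJA H L₀ A := ⟨y, rfl⟩
  have horth := (Submodule.mem_orthogonal _ _).1 (hA.hatJ_mem hy) _ hx
  have e1 : ⟪(x : Hh H), hatJ H y⟫_ℂ = 0 :=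
    (Submodule.mem_orthogonal L₀ _).1 (hL₀.hatJ_mem y.2) _ x.2
  have e2 : ⟪hatJ H (A x), (A y : Hh H)⟫_ℂ = 0 :=
    (Submodule.mem_orthogonal' L₀ _).1 (hL₀.hatJ_mem (A x).2) _ (A y).2
  rw [map_add, hatJ_hatJ, inner_add_left, inner_add_right, inner_add_right, e1,
    inner_hatJ_hatJ, inner_neg_right, inner_neg_right, e2] at horth
  simp only [ContinuousLinearMap.coe_coe, Submodule.coe_inner]
  linear_combination horth

end IsLagrangian

end Lagrangian

variable (H : Type) [NormedAddCommGroup H] [InnerProductSpace ℂ H] [CompleteSpace H]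

/-- for lagrangians `L, L₀` of `Ĥ = H ⊕ H` the following are equivalent:
(a) `L` is the graph of `JA : L₀ → L₀⊥` with `A` bounded self-adjoint on `L₀`;
(b) `L ∩ L₀⊥ = 0` and `L + L₀⊥` is closed;
(b') `Ĥ = L ⊕ L₀⊥`;
(b'') `Ĥ = L + L₀⊥`;
(c) `R_L + R_{L₀}` is invertible. -/
theorem arnold_chart_tfae (L L₀ : Submodule ℂ (Hh H))
    (hL : IsLagrangian H L) (hL₀ : IsLagrangian H L₀)
    [CompleteSpace ↥L] [CompleteSpace ↥L₀] :
    List.TFAE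
      [ (∃ A : ↥L₀ →L[ℂ] ↥L₀, (∀ x y : ↥L₀, ⟪A x, y⟫_ℂ = ⟪x, A y⟫_ℂ) ∧ L = graphJA H L₀ A),
        (L ⊓ L₀ᗮ = ⊥ ∧ IsClosed ((L ⊔ L₀ᗮ : Submodule ℂ (Hh H)) : Set (Hh H))),
        IsCompl L (L₀ᗮ),
        L ⊔ L₀ᗮ = ⊤,
        IsUnit (reflIn H L + reflIn H L₀) ] := by
  tfae_have 1 → 4 := by
    rintro ⟨A, -, rfl⟩
    exact hL₀.graphJA_sup_orthogonal_eq_top A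
  tfae_have 4 → 3 := fun h => ⟨disjoint_iff.2 ((hL.inf_orthogonal_eq_bot_iff hL₀).2
    (by rw [h, Submodule.top_orthogonal_eq_bot])), codisjoint_iff.2 h⟩
  tfae_have 3 → 2 := fun h => ⟨h.inf_eq_bot, by rw [h.sup_eq_top]; exact isClosed_univ⟩
  tfae_have 2 → 4 := by
    rintro ⟨hinf, hclosed⟩
    have := hclosed.completeSpace_coe
    exact Submodule.orthogonal_eq_bot_iff.1 ((hL.inf_orthogonal_eq_bot_iff hL₀).1 hinf)
  tfae_have 3 → 1 := by
    intro h
    obtain ⟨A, rfl⟩ := hL₀.exists_eq_graphJA h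
    exact ⟨A, hL₀.isSymmetric_of_graphJA hL, rfl⟩
  tfae_have 3 → 5 := fun h => (isUnit_reflIn_add_reflIn_iff L L₀).2
    ⟨Submodule.injective_starProjection_sub h, Submodule.surjective_starProjection_sub
      h.sup_eq_top (hL.orthogonal_sup_orthogonal_eq_top hL₀ h.sup_eq_top)⟩
  tfae_have 5 → 4 := by
    intro h
    rw [eq_top_iff, ← LinearMap.range_eq_top.2 ((isUnit_reflIn_add_reflIn_iff L L₀).1 h).2]
    exact Submodule.range_starProjection_sub_le
  tfae_finish
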